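/- Bernoulli–Carlitz numbers via Stirling–Carlitz numbers of the second kind: for every n ≥ 1, BC_n = Π(n) Σ_{k=1}^{n} (n+1 choose k+1) · ((−1)^k Π(k)/Π(n + k)) · {n + k brace k}_C. -/

import Mathlib

/-!
Carlitz module: `Fq` is a finite field with `r = Fintype.card Fq` elements (so `r` is a
power of a prime `p`), and `K = Fq(T)` is the field of rational functions over `Fq`.
-/

noncomputable section

variable (Fq : Type*) [Field Fq] [Fintype Fq]

/-- `r`, the number of elements of the finite field `Fq` (a prime power). -/
def rq : ℕ := Fintype.card Fq

/-- `[i] = T^{r^i} − T` in `K = Fq(T)`. -/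
def carlitzBracket (i : ℕ) : RatFunc Fq := RatFunc.X ^ rq Fq ^ i - RatFunc.X

/-- `D_0 = 1`, `D_i = [i]·D_{i−1}^r`. -/
def carlitzD : ℕ → RatFunc Fq
  | 0 => 1
  | i + 1 => carlitzBracket Fq (i + 1) * carlitzD i ^ rq Fq

/-- `L_0 = 1`, `L_i = [i]·L_{i−1}`. -/
def carlitzL : ℕ → RatFunc Fq
  | 0 => 1
  | i + 1 => carlitzBracket Fq (i + 1) * carlitzL i

/-- The Carlitz factorial `Π(i) = ∏_j D_j^{c_j}`, where `i = Σ_j c_j r^j` with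
`0 ≤ c_j < r` is the base-`r` expansion of `i`. -/
def carlitzPi (i : ℕ) : RatFunc Fq :=
  ∏ j ∈ Finset.range (i + 1), carlitzD Fq j ^ (Nat.digits (rq Fq) i).getD j 0

/-- The power series `Σ_{j=0}^∞ (D_N/D_{N+j}) x^{r^{N+j} − r^N}`, i.e.
`(e_C(x) − Σ_{i=0}^{N−1} x^{r^i}/D_i)·D_N/x^{r^N}`; it has constant term `1`. -/
def bcSeries (N : ℕ) : PowerSeries (RatFunc Fq) :=
  PowerSeries.mk fun m => ∑ j ∈ Finset.range (m + 1),
    if m = rq Fq ^ (N + j) - rq Fq ^ N then carlitzD Fq N / carlitzD Fq (N + j) else 0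

/-- The truncated Bernoulli–Carlitz number `BC_{N,n}`: `BC_{N,n}/Π(n)` is the `n`-th
coefficient of the multiplicative inverse of the power series
`Σ_{j=0}^∞ (D_N/D_{N+j}) x^{r^{N+j} − r^N}`. -/
def truncBC (N n : ℕ) : RatFunc Fq :=
  carlitzPi Fq n * PowerSeries.coeff n (bcSeries Fq N)⁻¹

/-- The power series `Σ_{j=0}^∞ (−1)^j (L_N/L_{N+j}) x^{r^{N+j} − r^N}`, i.e.
`(log_C(x) − Σ_{i=0}^{N−1} (−1)^i x^{r^i}/L_i)·(−1)^N L_N/x^{r^N}`;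
it has constant term `1`. -/
def ccSeries (N : ℕ) : PowerSeries (RatFunc Fq) :=
  PowerSeries.mk fun m => ∑ j ∈ Finset.range (m + 1),
    if m = rq Fq ^ (N + j) - rq Fq ^ N then
      (-1) ^ j * carlitzL Fq N / carlitzL Fq (N + j) else 0

/-- The truncated Cauchy–Carlitz number `CC_{N,n}`: `CC_{N,n}/Π(n)` is the `n`-th
coefficient of the multiplicative inverse of the power series
`Σ_{j=0}^∞ (−1)^j (L_N/L_{N+j}) x^{r^{N+j} − r^N}`. -/
def truncCC (N n : ℕ) : RatFunc Fq :=
  carlitzPi Fq n * PowerSeries.coeff n (ccSeries Fq N)⁻¹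

/-- The tail `e_C(z) − 𝓔_{N−1}(z) = Σ_{i=N}^∞ z^{r^i}/D_i` of the Carlitz exponential. -/
def carlitzExpTail (N : ℕ) : PowerSeries (RatFunc Fq) :=
  PowerSeries.mk fun m => ∑ j ∈ Finset.range (m + 1),
    if m = rq Fq ^ (N + j) then (carlitzD Fq (N + j))⁻¹ else 0

/-- The associated Stirling–Carlitz number of the second kind `{n brace k}_{C,≥N}`,
defined by `(e_C(z) − 𝓔_{N−1}(z))^k/Π(k) = Σ_n {n brace k}_{C,≥N} z^n/Π(n)`. -/
def stirling2C (N k n : ℕ) : RatFunc Fq :=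
  carlitzPi Fq n / carlitzPi Fq k * PowerSeries.coeff n (carlitzExpTail Fq N ^ k)

/-- The tail `log_C(z) − 𝓕_{N−1}(z) = Σ_{i=N}^∞ (−1)^i z^{r^i}/L_i` of the Carlitz
logarithm. -/
def carlitzLogTail (N : ℕ) : PowerSeries (RatFunc Fq) :=
  PowerSeries.mk fun m => ∑ j ∈ Finset.range (m + 1),
    if m = rq Fq ^ (N + j) then (-1) ^ (N + j) * (carlitzL Fq (N + j))⁻¹ else 0

/-- The associated Stirling–Carlitz number of the first kind `{n brack k}_{C,≥N}`,
defined by `(log_C(z) − 𝓕_{N−1}(z))^k/Π(k) = Σ_n {n brack k}_{C,≥N} z^n/Π(n)`. -/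
def stirling1C (N k n : ℕ) : RatFunc Fq :=
  carlitzPi Fq n / carlitzPi Fq k * PowerSeries.coeff n (carlitzLogTail Fq N ^ k)

lemma two_le_rq : 2 ≤ rq Fq := Fintype.one_lt_card

lemma carlitzBracket_ne_zero (i : ℕ) (hi : 1 ≤ i) : carlitzBracket Fq i ≠ 0 := by
  have h2 : 2 ≤ rq Fq ^ i :=
    le_trans (two_le_rq Fq) (Nat.le_self_pow (by omega) _)
  rw [carlitzBracket, ← RatFunc.algebraMap_X, ← map_pow, ← map_sub]
  apply RatFunc.algebraMap_ne_zero
  intro hzero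
  have := congrArg (fun p => Polynomial.coeff p (rq Fq ^ i)) hzero
  have hne : rq Fq ^ i ≠ 1 := by omega
  simp [Polynomial.coeff_X_pow, Polynomial.coeff_X, hne, Ne.symm hne] at this

lemma carlitzD_ne_zero (i : ℕ) : carlitzD Fq i ≠ 0 := by
  induction i with
  | zero => simp [carlitzD]
  | succ i ih =>
    simp only [carlitzD]
    exact mul_ne_zero (carlitzBracket_ne_zero Fq (i+1) (by omega)) (pow_ne_zero _ ih)

lemma carlitzPi_ne_zero (i : ℕ) : carlitzPi Fq i ≠ 0 := by
  rw [carlitzPi]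
  exact Finset.prod_ne_zero_iff.mpr fun j _ => pow_ne_zero _ (carlitzD_ne_zero Fq j)

lemma constantCoeff_bcSeries : PowerSeries.constantCoeff (bcSeries Fq 0) = 1 := by
  rw [← PowerSeries.coeff_zero_eq_constantCoeff, bcSeries, PowerSeries.coeff_mk]
  simp [carlitzD]

lemma expTail_eq_X_mul_bcSeries :
    carlitzExpTail Fq 0 = PowerSeries.X * bcSeries Fq 0 := by
  ext m
  cases m with
  | zero =>
    rw [carlitzExpTail, PowerSeries.coeff_mk]
    simp only [PowerSeries.coeff_zero_eq_constantCoeff, map_mul,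
      PowerSeries.constantCoeff_X, zero_mul]
    apply Finset.sum_eq_zero
    intro j _
    rw [if_neg]
    have : 0 < rq Fq ^ (0 + j) := Nat.pow_pos (by have := two_le_rq Fq; omega)
    omega
  | succ m =>
    rw [PowerSeries.coeff_succ_X_mul, carlitzExpTail, bcSeries,
      PowerSeries.coeff_mk, PowerSeries.coeff_mk, Finset.sum_range_succ]
    have hlast : ¬ (m + 1 = rq Fq ^ (0 + (m+1))) := by
      have : m + 1 < rq Fq ^ (m + 1) :=
        Nat.lt_pow_self (by have := two_le_rq Fq; omega)
      simpa using this.ne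
    rw [if_neg hlast, add_zero]
    apply Finset.sum_congr rfl
    intro j hj
    have h1 : 1 ≤ rq Fq ^ (0 + j) := Nat.one_le_pow _ _ (by have := two_le_rq Fq; omega)
    have hcond : (m + 1 = rq Fq ^ (0 + j)) ↔ (m = rq Fq ^ (0 + j) - rq Fq ^ 0) := by
      simp only [pow_zero]; omega
    rw [if_congr hcond rfl rfl]
    congr 1
    simp [carlitzD]


lemma coeff_inv_bcSeries (n : ℕ) (hn : 1 ≤ n) :
    PowerSeries.coeff n (bcSeries Fq 0)⁻¹ =
      ∑ i ∈ Finset.Icc 1 n, ((n + 1).choose (i + 1) : RatFunc Fq) * ((-1) ^ i *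
        PowerSeries.coeff (n + i) (carlitzExpTail Fq 0 ^ i)) := by
  set g := bcSeries Fq 0 with hgdef
  set f := carlitzExpTail Fq 0 with hfdef
  set c : ℕ → RatFunc Fq := fun i => PowerSeries.coeff (n + i) (f ^ i) with hcdef
  have hg0 : PowerSeries.constantCoeff g = 1 := constantCoeff_bcSeries Fq
  have hfg : f = PowerSeries.X * g := expTail_eq_X_mul_bcSeries Fq
  have hginv : g * g⁻¹ = 1 := PowerSeries.mul_inv_cancel _ (by rw [hg0]; exact one_ne_zero)
  have hmul : g * (∑ k ∈ Finset.range (n+1), (-(g-1))^k) = 1 - (-(g-1))^(n+1) := by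
    have hgs := geom_sum_mul (-(g-1)) (n+1)
    linear_combination -hgs
  have hsplit : g⁻¹ = (∑ k ∈ Finset.range (n+1), (-(g-1))^k) + g⁻¹ * (-(g-1))^(n+1) := by
    calc g⁻¹ = g⁻¹ * (g * (∑ k ∈ Finset.range (n+1), (-(g-1))^k)) + g⁻¹ * (-(g-1))^(n+1) := by
          rw [hmul]; ring
      _ = _ := by rw [← mul_assoc, mul_comm g⁻¹ g, hginv, one_mul]
  have hXdvd : PowerSeries.X ^ (n+1) ∣ g⁻¹ * (-(g-1))^(n+1) := by
    apply Dvd.dvd.mul_left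
    apply pow_dvd_pow_of_dvd
    rw [dvd_neg, PowerSeries.X_dvd_iff]
    simp [hg0]
  have hrem : PowerSeries.coeff n (g⁻¹ * (-(g-1))^(n+1)) = 0 := by
    obtain ⟨q, hq⟩ := hXdvd
    rw [hq, mul_comm, PowerSeries.coeff_mul_X_pow']
    rw [if_neg (by omega)]
  have hcoeffk : ∀ k, PowerSeries.coeff n ((g-1)^k) =
      ∑ i ∈ Finset.range (k+1), (-1:RatFunc Fq)^(k-i) * (Nat.choose k i : RatFunc Fq) * c i := by
    intro k
    have h1 : (g-1)^k * PowerSeries.X ^ k = (f - PowerSeries.X)^k := by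
      rw [← mul_pow, hfg]; ring_nf
    have h2 : PowerSeries.coeff n ((g-1)^k)
        = PowerSeries.coeff (n+k) ((f - PowerSeries.X)^k) := by
      rw [← h1, PowerSeries.coeff_mul_X_pow]
    rw [h2, sub_eq_add_neg, add_pow, map_sum]
    apply Finset.sum_congr rfl
    intro i hi
    have hik : i ≤ k := Nat.lt_succ_iff.mp (Finset.mem_range.mp hi)
    have h3 : f^i * (-PowerSeries.X)^(k-i) * (Nat.choose k i : PowerSeries (RatFunc Fq)) =
        PowerSeries.C ((-1:RatFunc Fq)^(k-i) * (Nat.choose k i : RatFunc Fq)) *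
          (f^i * PowerSeries.X^(k-i)) := by
      rw [map_mul, map_pow, map_neg, map_one, map_natCast]
      ring
    rw [h3, PowerSeries.coeff_C_mul,
      show n + k = (n + i) + (k - i) by omega, PowerSeries.coeff_mul_X_pow]
  have hnegk : ∀ k, PowerSeries.coeff n ((-(g-1))^k)
      = (-1:RatFunc Fq)^k * PowerSeries.coeff n ((g-1)^k) := by
    intro k
    have : (-(g-1) : PowerSeries (RatFunc Fq))^k
        = PowerSeries.C ((-1)^k) * (g-1)^k := by
      rw [map_pow, map_neg, map_one, neg_pow]
    rw [this, PowerSeries.coeff_C_mul]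
  rw [hsplit, map_add, hrem, add_zero, map_sum]
  calc (∑ k ∈ Finset.range (n+1), PowerSeries.coeff n ((-(g-1))^k))
      = ∑ k ∈ Finset.range (n+1), ∑ i ∈ Finset.range (n+1),
          (-1:RatFunc Fq)^i * (Nat.choose k i : RatFunc Fq) * c i := by
        apply Finset.sum_congr rfl
        intro k hk
        rw [hnegk, hcoeffk, Finset.mul_sum]
        rw [Finset.sum_subset (Finset.range_subset_range.mpr
          (Nat.succ_le_succ (Nat.lt_succ_iff.mp (Finset.mem_range.mp hk))))]
        · apply Finset.sum_congr rfl
          intro i hi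
          by_cases hik : i ≤ k
          case neg =>
            rw [Nat.choose_eq_zero_of_lt (by omega)]
            simp
          have hsgn : (-1:RatFunc Fq)^k * (-1:RatFunc Fq)^(k-i) = (-1:RatFunc Fq)^i := by
            rw [← pow_add, show k + (k-i) = i + 2*(k-i) by omega, pow_add, pow_mul,
              neg_one_sq, one_pow, mul_one]
          rw [← mul_assoc, ← mul_assoc, hsgn]
        · intro i hi hni
          have : k < i := by
            simp only [Finset.mem_range] at hi hni; omega
          rw [Nat.choose_eq_zero_of_lt this]
          simp
    _ = ∑ i ∈ Finset.range (n+1),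
          ((n+1).choose (i+1) : RatFunc Fq) * ((-1:RatFunc Fq)^i * c i) := by
        rw [Finset.sum_comm]
        apply Finset.sum_congr rfl
        intro i hi
        have hhs : ∑ k ∈ Finset.range (n+1), Nat.choose k i = Nat.choose (n+1) (i+1) := by
          rw [← Nat.sum_Icc_choose]
          refine (Finset.sum_subset (fun x hx => Finset.mem_range.mpr ?_) ?_).symm
          · exact Nat.lt_succ_of_le (Finset.mem_Icc.mp hx).2
          · intro x hx hnx
            simp only [Finset.mem_range, Finset.mem_Icc] at hx hnx
            exact Nat.choose_eq_zero_of_lt (by omega)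
        calc (∑ k ∈ Finset.range (n+1), (-1:RatFunc Fq)^i * (Nat.choose k i : RatFunc Fq) * c i)
            = ((∑ k ∈ Finset.range (n+1), Nat.choose k i : ℕ) : RatFunc Fq)
                * ((-1:RatFunc Fq)^i * c i) := by
              rw [Nat.cast_sum, Finset.sum_mul]
              apply Finset.sum_congr rfl
              intro k _
              ring
          _ = _ := by rw [hhs]
    _ = ∑ i ∈ Finset.Icc 1 n,
          ((n+1).choose (i+1) : RatFunc Fq) * ((-1:RatFunc Fq)^i * c i) := by
        refine (Finset.sum_subset (fun x hx => Finset.mem_range.mpr ?_) ?_).symm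
        · exact Nat.lt_succ_of_le (Finset.mem_Icc.mp hx).2
        · intro x hx hnx
          simp only [Finset.mem_range, Finset.mem_Icc] at hx hnx
          have hx0 : x = 0 := by omega
          subst hx0
          have : c 0 = 0 := by
            simp only [hcdef, pow_zero, Nat.add_zero, PowerSeries.coeff_one]
            rw [if_neg (by omega)]
          rw [this]
          ring

/-- Bernoulli–Carlitz numbers (`BC_n = BC_{0,n}`) via Stirling–Carlitz
numbers of the second kind (`{n brace k}_C = {n brace k}_{C,≥0}`). -/
theorem bernoulliCarlitz_eq_sum_stirling2C (n : ℕ) (hn : 1 ≤ n) :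
    truncBC Fq 0 n =
      carlitzPi Fq n * ∑ k ∈ Finset.Icc 1 n,
        ((n + 1).choose (k + 1) : RatFunc Fq) *
          ((-1) ^ k * carlitzPi Fq k / carlitzPi Fq (n + k)) *
          stirling2C Fq 0 k (n + k) := by
  rw [truncBC, coeff_inv_bcSeries Fq n hn]
  congr 1
  apply Finset.sum_congr rfl
  intro k hk
  rw [stirling2C]
  have h1 : carlitzPi Fq k ≠ 0 := carlitzPi_ne_zero Fq k
  have h2 : carlitzPi Fq (n + k) ≠ 0 := carlitzPi_ne_zero Fq (n + k)
  field_simp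

end
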